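/- arXiv:2205.09574 — 4 statements merged into one kernel-verified Lean document; each statement's English description precedes it below -/
import Mathlib

section
/- Lemma (Stability of unicycle dynamics under the stabilizing control law). Consider the unicycle polar-coordinate dynamics ξ̇ = −v cos(φ), φ̇ = (v/ξ) sin(φ) − ω with the control law v = k ξ cos(φ), ω = k(cos(φ)+1) sin(φ) + kφ, for a gain k > 0, so that the closed-loop dynamics are ξ̇ = −k ξ cos²(φ), φ̇ = −k sin(φ) − k φ. Then (ξ,φ) = (0,0) is the unique equilibrium point of the closed loop, and it is exponentially stable: every differentiable solution (ξ(t), φ(t)) on [0,∞) of the closed-loop equations with |φ(0)| ≤ π satisfies, for all t ≥ 0, |φ(t)| ≤ |φ(0)| e^{−kt} and |ξ(t)| ≤ e^{φ(0)²/2} |ξ(0)| e^{−kt}. -/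
/-!
Both bounds come from one comparison principle: if `x x' ≤ B' x²`, then `x² e^{-2B}` is
nonincreasing, so `|x t| ≤ |x t₀| e^{B t - B t₀}`. Since `|sin φ| ≤ |φ|`, the heading error
satisfies `φ φ' ≤ 0`, so `|φ|` never exceeds `|φ 0| ≤ π`; on `[-π, π]` we have `φ sin φ ≥ 0`,
hence `φ φ' ≤ -k φ²` and `|φ t| ≤ |φ 0| e^{-kt}`. For the distance,
`ξ ξ' = -k ξ² + k ξ² sin² φ ≤ (-k + k φ(0)² e^{-2kt}) ξ²`, and the perturbation term integrates
to at most `φ(0)² / 2`, which produces the overshoot factor `e^{φ(0)²/2}`.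
-/

open Real Set

lemma sin_add_self_eq_zero_iff (x : ℝ) : sin x + x = 0 ↔ x = 0 := by
  refine ⟨fun h => by_contra fun hx => ?_, fun h => by simp [h]⟩
  have := abs_sin_lt_abs hx
  rw [show sin x = -x by linarith, abs_neg] at this
  exact lt_irrefl _ this

lemma neg_sq_le_mul_sin (x : ℝ) : -x ^ 2 ≤ x * sin x := by
  have h := mul_le_mul_of_nonneg_left (abs_sin_le_abs (x := x)) (abs_nonneg x)
  rw [← abs_mul, ← sq, sq_abs] at h
  linarith [neg_abs_le (x * sin x)]

lemma mul_sin_nonneg_of_abs_le_pi {x : ℝ} (hx : |x| ≤ π) : 0 ≤ x * sin x := by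
  rcases le_total 0 x with h | h
  · exact mul_nonneg h (sin_nonneg_of_nonneg_of_le_pi h (abs_le.1 hx).2)
  · exact mul_nonneg_of_nonpos_of_nonpos h (sin_nonpos_of_nonpos_of_neg_pi_le h (abs_le.1 hx).1)

lemma antitoneOn_Ici_of_hasDerivAt_nonpos {f f' : ℝ → ℝ} {t₀ : ℝ}
    (hf : ∀ t, t₀ ≤ t → HasDerivAt f (f' t) t) (hf' : ∀ t, t₀ < t → f' t ≤ 0) :
    AntitoneOn f (Ici t₀) := by
  refine antitoneOn_of_hasDerivWithinAt_nonpos (f' := f') (convex_Ici t₀)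
    (fun t ht => (hf t ht).continuousAt.continuousWithinAt) (fun t ht => ?_) (fun t ht => ?_)
  · rw [interior_Ici] at ht ⊢
    exact (hf t (le_of_lt ht)).hasDerivWithinAt
  · rw [interior_Ici] at ht
    exact hf' t ht

theorem abs_le_abs_mul_exp_of_mul_deriv_le {x x' B B' : ℝ → ℝ} {t₀ : ℝ}
    (hx : ∀ t, t₀ ≤ t → HasDerivAt x (x' t) t) (hB : ∀ t, t₀ ≤ t → HasDerivAt B (B' t) t)
    (hle : ∀ t, t₀ ≤ t → x t * x' t ≤ B' t * x t ^ 2) {t : ℝ} (ht : t₀ ≤ t) :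
    |x t| ≤ |x t₀| * exp (B t - B t₀) := by
  have hW : ∀ s, t₀ ≤ s → HasDerivAt (fun s => x s ^ 2 * exp (-(2 * B s)))
      (2 * exp (-(2 * B s)) * (x s * x' s - B' s * x s ^ 2)) s := by
    intro s hs
    refine (((hx s hs).pow 2).mul ((hB s hs).const_mul 2).neg.exp).congr_deriv ?_
    simp only [Pi.neg_apply, Pi.pow_apply, Nat.cast_ofNat]
    ring
  have hanti := antitoneOn_Ici_of_hasDerivAt_nonpos hW fun s hs =>
    mul_nonpos_of_nonneg_of_nonpos (by positivity) (sub_nonpos.2 (hle s hs.le))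
  have hWt : x t ^ 2 * exp (-(2 * B t)) ≤ x t₀ ^ 2 * exp (-(2 * B t₀)) :=
    hanti self_mem_Ici ht ht
  refine abs_le_of_sq_le_sq ?_ (by positivity)
  calc x t ^ 2 = x t ^ 2 * exp (-(2 * B t)) * exp (2 * B t) := by
        rw [mul_assoc, ← exp_add, neg_add_cancel, exp_zero, mul_one]
    _ ≤ x t₀ ^ 2 * exp (-(2 * B t₀)) * exp (2 * B t) := by gcongr
    _ = (|x t₀| * exp (B t - B t₀)) ^ 2 := by
        rw [mul_pow, sq_abs, ← exp_nat_mul, mul_assoc, ← exp_add]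
        push_cast
        ring_nf

theorem closed_loop_eq_zero_iff {k : ℝ} (hk : k ≠ 0) (p q : ℝ) :
    (-k * p * cos q ^ 2 = 0 ∧ -k * sin q - k * q = 0) ↔ (p = 0 ∧ q = 0) := by
  rw [show -k * sin q - k * q = -k * (sin q + q) by ring]
  simp only [mul_eq_zero, neg_eq_zero, hk, false_or, sin_add_self_eq_zero_iff]
  constructor
  · rintro ⟨hp, rfl⟩
    simpa using hp
  · rintro ⟨rfl, rfl⟩
    simp

section ClosedLoop

variable {k : ℝ} (hk : 0 ≤ k)
include hk

theorem abs_heading_le_exp {φ : ℝ → ℝ}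
    (hφ : ∀ t, 0 ≤ t → HasDerivAt φ (-k * sin (φ t) - k * φ t) t) (hφ0 : |φ 0| ≤ π)
    {t : ℝ} (ht : 0 ≤ t) : |φ t| ≤ |φ 0| * exp (-k * t) := by
  have hlin : ∀ s, HasDerivAt (fun s => -k * s) (-k) s := fun s => by
    simpa using (hasDerivAt_id s).const_mul (-k)
  have hφ_le_pi : ∀ s, 0 ≤ s → |φ s| ≤ π := fun s hs => by
    have := abs_le_abs_mul_exp_of_mul_deriv_le hφ (fun s _ => hasDerivAt_const s (0 : ℝ))
      (fun s _ => by nlinarith [neg_sq_le_mul_sin (φ s)]) hs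
    simp only [sub_self, exp_zero, mul_one] at this
    exact this.trans hφ0
  simpa using abs_le_abs_mul_exp_of_mul_deriv_le hφ (fun s _ => hlin s)
    (fun s hs => by nlinarith [mul_sin_nonneg_of_abs_le_pi (hφ_le_pi s hs)]) ht

theorem abs_distance_le_exp {ξ φ : ℝ → ℝ} {a : ℝ}
    (hξ : ∀ t, 0 ≤ t → HasDerivAt ξ (-k * ξ t * cos (φ t) ^ 2) t)
    (hφ : ∀ t, 0 ≤ t → |φ t| ≤ a * exp (-k * t)) {t : ℝ} (ht : 0 ≤ t) :
    |ξ t| ≤ exp (a ^ 2 / 2) * |ξ 0| * exp (-k * t) := by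
  set B : ℝ → ℝ := fun s => -k * s - (a * exp (-k * s)) ^ 2 / 2
  have hB : ∀ s, HasDerivAt B (-k + k * (a * exp (-k * s)) ^ 2) s := fun s => by
    have hlin : HasDerivAt (fun s => -k * s) (-k) s := by
      simpa using (hasDerivAt_id s).const_mul (-k)
    refine (hlin.sub (((hlin.exp.const_mul a).pow 2).div_const 2)).congr_deriv ?_
    simp only [Nat.cast_ofNat]
    ring
  have hsin : ∀ s, 0 ≤ s → sin (φ s) ^ 2 ≤ (a * exp (-k * s)) ^ 2 := fun s hs =>
    sin_sq_le_sq.trans (sq_abs (φ s) ▸ pow_le_pow_left₀ (abs_nonneg _) (hφ s hs) 2)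
  have hle : ∀ s, 0 ≤ s →
      ξ s * (-k * ξ s * cos (φ s) ^ 2) ≤ (-k + k * (a * exp (-k * s)) ^ 2) * ξ s ^ 2 := by
    intro s hs
    rw [cos_sq']
    nlinarith [mul_le_mul_of_nonneg_left (hsin s hs) (mul_nonneg hk (sq_nonneg (ξ s)))]
  have hB_sub : B t - B 0 ≤ a ^ 2 / 2 + -k * t := by
    simp only [B, mul_zero, exp_zero, mul_one]
    nlinarith [sq_nonneg (a * exp (-k * t))]
  calc |ξ t| ≤ |ξ 0| * exp (B t - B 0) :=
        abs_le_abs_mul_exp_of_mul_deriv_le hξ (fun s _ => hB s) hle ht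
    _ ≤ |ξ 0| * exp (a ^ 2 / 2 + -k * t) := by gcongr
    _ = exp (a ^ 2 / 2) * |ξ 0| * exp (-k * t) := by rw [exp_add]; ring

end ClosedLoop

/-- Stability of the unicycle polar-coordinate dynamics under the stabilizing control law
`v = kξcos(φ)`, `ω = k(cos(φ)+1)sin(φ) + kφ`, giving the closed loop
`ξ̇ = −kξcos²(φ)`, `φ̇ = −k sin(φ) − kφ`: the origin is the unique equilibrium point and
it is exponentially stable. -/
theorem unicycle_closed_loop_stability
    (k : ℝ) (hk : 0 < k)
    (ξ φ : ℝ → ℝ)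
    (hξ : ∀ t, 0 ≤ t → HasDerivAt ξ (-k * ξ t * Real.cos (φ t) ^ 2) t)
    (hφ : ∀ t, 0 ≤ t → HasDerivAt φ (-k * Real.sin (φ t) - k * φ t) t)
    (hφ0 : |φ 0| ≤ π) :
    (∀ p q : ℝ, (-k * p * Real.cos q ^ 2 = 0 ∧ -k * Real.sin q - k * q = 0) ↔
        (p = 0 ∧ q = 0)) ∧
    (∀ t, 0 ≤ t →
      |φ t| ≤ |φ 0| * Real.exp (-k * t) ∧
      |ξ t| ≤ Real.exp ((φ 0) ^ 2 / 2) * |ξ 0| * Real.exp (-k * t)) := by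
  have hφt : ∀ t, 0 ≤ t → |φ t| ≤ |φ 0| * exp (-k * t) :=
    fun t ht => abs_heading_le_exp hk.le hφ hφ0 ht
  refine ⟨closed_loop_eq_zero_iff hk.ne', fun t ht => ⟨hφt t ht, ?_⟩⟩
  exact sq_abs (φ 0) ▸ abs_distance_le_exp hk.le hξ hφt ht
end

section
/- Projected gradient descent inequality (Step 5 of the proof of Theorem 1). Let H be a real inner-product space (e.g. Euclidean space ℝ^{n_u}), let 𝒞 ⊆ H be nonempty, closed and convex, let η > 0, and let F: H → H be μ-strongly monotone (⟨F(a) − F(b), a − b⟩ ≥ μ‖a − b‖² for all a,b) and ℓ-Lipschitz. Let u* ∈ 𝒞 satisfy the variational inequality ⟨F(u*), v − u*⟩ ≥ 0 for all v ∈ 𝒞. For any u ∈ H, let P ∈ 𝒞 be the Euclidean projection of u − ηF(u) onto 𝒞, i.e. ⟨(u − ηF(u)) − P, v − P⟩ ≤ 0 for all v ∈ 𝒞. Then ⟨u − u*, P − u⟩ ≤ −η(μ − ηℓ²/4)‖u − u*‖². -/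
open scoped RealInnerProductSpace

/-- Projected gradient descent inequality (Step 5 of the proof of Theorem 1). -/
theorem projected_gradient_descent_inequality
    {H : Type*} [NormedAddCommGroup H] [InnerProductSpace ℝ H]
    (C : Set H) (hCne : C.Nonempty) (hCcl : IsClosed C) (hCconv : Convex ℝ C)
    (η : ℝ) (hη : 0 < η) (μ ℓ : ℝ)
    (F : H → H)
    (hmono : ∀ a b : H, μ * ‖a - b‖ ^ 2 ≤ ⟪F a - F b, a - b⟫)
    (hlip : ∀ a b : H, ‖F a - F b‖ ≤ ℓ * ‖a - b‖)
    (ustar : H) (hustar : ustar ∈ C)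
    (hvi : ∀ v ∈ C, 0 ≤ ⟪F ustar, v - ustar⟫)
    (u P : H) (hP : P ∈ C)
    (hproj : ∀ v ∈ C, ⟪(u - η • F u) - P, v - P⟫ ≤ 0) :
    ⟪u - ustar, P - u⟫ ≤ -(η * (μ - η * ℓ ^ 2 / 4)) * ‖u - ustar‖ ^ 2 := by
  have h1 : ⟪(u - η • F u) - P, ustar - P⟫ ≤ 0 := hproj ustar hustar
  have h2 : 0 ≤ ⟪F ustar, P - ustar⟫ := hvi P hP
  have hmono' := hmono u ustar
  have hlip' := hlip u ustar
  -- expand h1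
  have h1' : ⟪u - P, ustar - P⟫ - η * ⟪F u, ustar - P⟫ ≤ 0 := by
    have : ⟪(u - η • F u) - P, ustar - P⟫
        = ⟪u - P, ustar - P⟫ - η * ⟪F u, ustar - P⟫ := by
      rw [show (u - η • F u) - P = (u - P) - η • F u by abel,
        inner_sub_left, inner_smul_left]
      norm_num
    linarith [this ▸ h1]
  -- goal identity
  have e1 : ⟪u - ustar, P - u⟫ = ⟪u - P, ustar - P⟫ - ‖P - u‖ ^ 2 := by
    rw [show u - ustar = (u - P) - (ustar - P) by abel, inner_sub_left,
      show P - u = -(u - P) by abel, inner_neg_right, inner_neg_right,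
      real_inner_self_eq_norm_sq, real_inner_comm (ustar - P), norm_neg]
    ring
  -- split F u
  have e2 : ⟪F u, ustar - P⟫
      = ⟪F u - F ustar, ustar - u⟫ + ⟪F u - F ustar, u - P⟫
        - ⟪F ustar, P - ustar⟫ := by
    rw [show ustar - P = (ustar - u) + (u - P) by abel, inner_add_right,
      inner_sub_left, inner_sub_left]
    have : ⟪F ustar, ustar - u⟫ + ⟪F ustar, u - P⟫ = -⟪F ustar, P - ustar⟫ := by
      rw [← inner_add_right, show (ustar - u) + (u - P) = -(P - ustar) by abel,
        inner_neg_right]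
    linarith
  have e3 : ⟪F u - F ustar, ustar - u⟫ = -⟪F u - F ustar, u - ustar⟫ := by
    rw [show ustar - u = -(u - ustar) by abel, inner_neg_right]
  have e4 : ⟪F u - F ustar, u - P⟫ ≤ ℓ * ‖u - ustar‖ * ‖u - P‖ := by
    calc ⟪F u - F ustar, u - P⟫ ≤ ‖F u - F ustar‖ * ‖u - P‖ :=
          real_inner_le_norm _ _
      _ ≤ ℓ * ‖u - ustar‖ * ‖u - P‖ :=
          mul_le_mul_of_nonneg_right hlip' (norm_nonneg _)
  have e5 : ‖P - u‖ = ‖u - P‖ := norm_sub_rev _ _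
  rw [e1, e5]
  have key : η * ⟪F u, ustar - P⟫
      ≤ -(η * μ) * ‖u - ustar‖ ^ 2 + η * (ℓ * ‖u - ustar‖ * ‖u - P‖) := by
    rw [e2, e3]
    have h2' : η * ⟪F ustar, P - ustar⟫ ≥ 0 := by positivity
    nlinarith [mul_le_mul_of_nonneg_left e4 hη.le,
      mul_le_mul_of_nonneg_left hmono' hη.le]
  nlinarith [sq_nonneg (η * ℓ * ‖u - ustar‖ - 2 * ‖u - P‖), h1', key]
end

section
/- Perturbed projected gradient descent inequality. Let H be a real inner-product space (e.g. Euclidean space ℝ^{n_u}), let 𝒞 ⊆ H be nonempty, closed and convex, let η > 0, and let F: H → H be μ-strongly monotone (⟨F(a) − F(b), a − b⟩ ≥ μ‖a − b‖² for all a,b) and ℓ-Lipschitz. Let u* ∈ 𝒞 satisfy ⟨F(u*), v − u*⟩ ≥ 0 for all v ∈ 𝒞. Let u ∈ H and g ∈ H, and let P′ ∈ 𝒞 be the Euclidean projection of u − ηg onto 𝒞, i.e. ⟨(u − ηg) − P′, v − P′⟩ ≤ 0 for all v ∈ 𝒞. Then ⟨u − u*, P′ − u⟩ ≤ −η(μ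 − ηℓ²/4)‖u − u*‖² + η‖g − F(u)‖·‖u − u*‖. -/
open scoped RealInnerProductSpace

lemma approx_proj_aux
    {H : Type*} [NormedAddCommGroup H] [InnerProductSpace ℝ H]
    (C : Set H) (hCne : C.Nonempty) (hCconv : Convex ℝ C)
    (w : H) (ε : ℝ) (hε : 0 < ε) :
    ∃ q ∈ C, (∀ v ∈ C, ⟪w - q, v - q⟫ ≤ ε * ‖v - q‖ + ε ^ 2) ∧
      ‖w - q‖ ≤ Metric.infDist w C + ε := by
  set D := Metric.infDist w C with hD
  have hD0 : 0 ≤ D := Metric.infDist_nonneg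
  have hlt : D < Real.sqrt (D ^ 2 + ε ^ 2) := by
    nth_rewrite 1 [show D = Real.sqrt (D ^ 2) by rw [Real.sqrt_sq hD0]]
    exact Real.sqrt_lt_sqrt (by positivity) (by nlinarith)
  obtain ⟨q, hqC, hqd⟩ := (Metric.infDist_lt_iff hCne).mp hlt
  rw [dist_eq_norm] at hqd
  have hq2 : ‖w - q‖ ^ 2 < D ^ 2 + ε ^ 2 := by
    nlinarith [Real.sq_sqrt (show (0:ℝ) ≤ D ^ 2 + ε ^ 2 by positivity),
      norm_nonneg (w - q), Real.sqrt_nonneg (D ^ 2 + ε ^ 2)]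
  have hDle : ∀ v ∈ C, D ≤ ‖w - v‖ := fun v hv => by
    rw [← dist_eq_norm]; exact Metric.infDist_le_dist_of_mem hv
  have key : ∀ v ∈ C, ∀ t : ℝ, 0 < t → t ≤ 1 →
      2 * t * ⟪w - q, v - q⟫ ≤ ε ^ 2 + t ^ 2 * ‖v - q‖ ^ 2 := by
    intro v hv t ht0 ht1
    have hvt : q + t • (v - q) ∈ C := by
      have h := hCconv hqC hv (by linarith : (0:ℝ) ≤ 1 - t) ht0.le (by ring)
      convert h using 1
      module
    have h1 : D ≤ ‖w - (q + t • (v - q))‖ := hDle _ hvt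
    have h2 : ‖w - (q + t • (v - q))‖ ^ 2
        = ‖w - q‖ ^ 2 - 2 * t * ⟪w - q, v - q⟫ + t ^ 2 * ‖v - q‖ ^ 2 := by
      have he : w - (q + t • (v - q)) = (w - q) - t • (v - q) := by module
      rw [he, norm_sub_sq_real, real_inner_smul_right, norm_smul,
        Real.norm_eq_abs, abs_of_pos ht0]
      ring
    nlinarith [h1, hq2, norm_nonneg (w - (q + t • (v - q)))]
  refine ⟨q, hqC, ?_, ?_⟩
  · intro v hv
    rcases le_or_gt ‖v - q‖ ε with h | h
    · have hk := key v hv 1 one_pos le_rfl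
      nlinarith [norm_nonneg (v - q), real_inner_le_norm (w - q) (v - q)]
    · have hn : 0 < ‖v - q‖ := lt_trans hε h
      set t : ℝ := ε / ‖v - q‖ with htdef
      have ht0 : 0 < t := by positivity
      have htn : t * ‖v - q‖ = ε := div_mul_cancel₀ ε hn.ne'
      have hk := key v hv t ht0 (by rw [htdef, div_le_one hn]; exact h.le)
      have h2 : 2 * t * ⟪w - q, v - q⟫ ≤ 2 * t * (ε * ‖v - q‖) := by nlinarith [hk, htn]
      have := le_of_mul_le_mul_left (by linarith [h2] : (2 * t) * ⟪w - q, v - q⟫ ≤ (2 * t) * (ε * ‖v - q‖)) (by positivity)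
      nlinarith [sq_nonneg ε]
  · nlinarith [norm_nonneg (w - q), hq2, hD0]



set_option maxHeartbeats 2000000 in
/-- Perturbed projected gradient descent inequality. -/
theorem perturbed_projected_gradient_descent_inequality
    {H : Type*} [NormedAddCommGroup H] [InnerProductSpace ℝ H]
    (C : Set H) (hCne : C.Nonempty) (hCcl : IsClosed C) (hCconv : Convex ℝ C)
    (η : ℝ) (hη : 0 < η) (μ ℓ : ℝ)
    (F : H → H)
    (hmono : ∀ a b : H, μ * ‖a - b‖ ^ 2 ≤ ⟪F a - F b, a - b⟫)
    (hlip : ∀ a b : H, ‖F a - F b‖ ≤ ℓ * ‖a - b‖)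
    (ustar : H) (hustar : ustar ∈ C)
    (hvi : ∀ v ∈ C, 0 ≤ ⟪F ustar, v - ustar⟫)
    (u g P' : H) (hP' : P' ∈ C)
    (hproj : ∀ v ∈ C, ⟪(u - η • g) - P', v - P'⟫ ≤ 0) :
    ⟪u - ustar, P' - u⟫ ≤
      -(η * (μ - η * ℓ ^ 2 / 4)) * ‖u - ustar‖ ^ 2 + η * ‖g - F u‖ * ‖u - ustar‖ := by
  obtain ⟨w, hw⟩ : ∃ w : H, w = u - η • F u := ⟨_, rfl⟩
  obtain ⟨K, hK⟩ : ∃ K : ℝ, K = 2 * ‖w - ustar‖ + 2 * ‖u - ustar‖ + 3 := ⟨_, rfl⟩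
  have hK3 : (3:ℝ) ≤ K := by
    rw [hK]
    have := norm_nonneg (w - ustar); have := norm_nonneg (u - ustar); linarith
  -- per-ε estimate
  have perε : ∀ ε : ℝ, 0 < ε → ε ≤ 1 →
      ⟪u - ustar, P' - u⟫ ≤
        -(η * (μ - η * ℓ ^ 2 / 4)) * ‖u - ustar‖ ^ 2 + η * ‖g - F u‖ * ‖u - ustar‖
        + ε * K := by
    intro ε hε hε1
    obtain ⟨q, hqC, hVI, hqn⟩ := approx_proj_aux C hCne hCconv w ε hε
    have hDle : Metric.infDist w C ≤ ‖w - ustar‖ := by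
      rw [← dist_eq_norm]; exact Metric.infDist_le_dist_of_mem hustar
    have hq_ustar : ‖ustar - q‖ ≤ 2 * ‖w - ustar‖ + 1 := by
      have ht : ‖ustar - q‖ ≤ ‖ustar - w‖ + ‖w - q‖ := norm_sub_le_norm_sub_add_norm_sub _ _ _
      have : ‖ustar - w‖ = ‖w - ustar‖ := norm_sub_rev _ _
      linarith
    -- Step 1: ‖q - P'‖ ≤ η‖g - F u‖ + 2ε
    have hA := hproj q hqC
    have hB := hVI P' hP'
    have hid1 : ‖q - P'‖ ^ 2 =
        ⟪(u - η • g) - P', q - P'⟫ + ⟪w - q, P' - q⟫ + η * ⟪g - F u, q - P'⟫ := by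
      rw [hw, ← real_inner_self_eq_norm_sq]
      simp only [inner_sub_left, inner_sub_right, real_inner_smul_left, real_inner_smul_right,
        real_inner_comm P' u, real_inner_comm q u, real_inner_comm q P',
        real_inner_comm (F u) u, real_inner_comm (F u) P', real_inner_comm (F u) q,
        real_inner_comm g u, real_inner_comm g P', real_inner_comm g q,
        real_inner_comm g (F u)]
      ring
    have hs : ‖q - P'‖ ≤ η * ‖g - F u‖ + 2 * ε := by
      have hcs : ⟪g - F u, q - P'⟫ ≤ ‖g - F u‖ * ‖q - P'‖ := real_inner_le_norm _ _
      have hrev : ‖P' - q‖ = ‖q - P'‖ := norm_sub_rev _ _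
      rw [hrev] at hB
      have hsq : ‖q - P'‖ ^ 2 ≤ ε * ‖q - P'‖ + ε ^ 2 + η * (‖g - F u‖ * ‖q - P'‖) := by
        have := mul_le_mul_of_nonneg_left hcs hη.le
        linarith [hid1, hA, hB]
      by_contra hcon
      push_neg at hcon
      have hA0 : 0 ≤ η * ‖g - F u‖ := mul_nonneg hη.le (norm_nonneg _)
      have hspos : 0 < ‖q - P'‖ := by linarith
      have h1 : (η * ‖g - F u‖ + 2 * ε) * ‖q - P'‖ < ‖q - P'‖ * ‖q - P'‖ :=
        mul_lt_mul_of_pos_right hcon hspos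
      have h2 : ε * ‖q - P'‖ < ε * ε := by nlinarith
      have h3 : ‖q - P'‖ < ε := lt_of_mul_lt_mul_left h2 hε.le
      linarith
    -- Step 2: bound ⟪u - ustar, q - u⟫
    have hC2 := hVI ustar hustar
    have hM := hmono u ustar
    have hL := hlip u ustar
    have hV := hvi q hqC
    have hCS : ⟪F u - F ustar, u - q⟫ ≤ ℓ * ‖u - ustar‖ * ‖u - q‖ := by
      have h1 : ⟪F u - F ustar, u - q⟫ ≤ ‖F u - F ustar‖ * ‖u - q‖ := real_inner_le_norm _ _
      have h2 : ‖F u - F ustar‖ * ‖u - q‖ ≤ (ℓ * ‖u - ustar‖) * ‖u - q‖ :=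
        mul_le_mul_of_nonneg_right hL (norm_nonneg _)
      linarith
    have hid2 : ⟪u - ustar, q - u⟫ = ⟪w - q, ustar - q⟫ - ‖u - q‖ ^ 2
        + η * (-⟪F u - F ustar, u - ustar⟫ + ⟪F u - F ustar, u - q⟫ - ⟪F ustar, q - ustar⟫) := by
      rw [hw, ← real_inner_self_eq_norm_sq]
      simp only [inner_sub_left, inner_sub_right, real_inner_smul_left, real_inner_smul_right,
        real_inner_comm ustar u, real_inner_comm q u, real_inner_comm q ustar,
        real_inner_comm (F u) u, real_inner_comm (F u) ustar, real_inner_comm (F u) q,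
        real_inner_comm (F ustar) u, real_inner_comm (F ustar) ustar,
        real_inner_comm (F ustar) q, real_inner_comm (F ustar) (F u)]
      ring
    have hqu : ⟪u - ustar, q - u⟫ ≤ -(η * μ) * ‖u - ustar‖ ^ 2
        + η ^ 2 * ℓ ^ 2 * ‖u - ustar‖ ^ 2 / 4 + ε * ‖ustar - q‖ + ε ^ 2 := by
      rw [hid2]
      nlinarith [sq_nonneg (‖u - q‖ - η * ℓ * ‖u - ustar‖ / 2),
        mul_le_mul_of_nonneg_left hCS hη.le, mul_le_mul_of_nonneg_left hM hη.le,
        mul_le_mul_of_nonneg_left hV hη.le]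
    -- Step 3: combine
    have hid3 : ⟪u - ustar, P' - u⟫ = ⟪u - ustar, q - u⟫ + ⟪u - ustar, P' - q⟫ := by
      rw [← inner_add_right]; congr 1; abel
    have hfin : ⟪u - ustar, P' - q⟫ ≤ ‖u - ustar‖ * (η * ‖g - F u‖ + 2 * ε) := by
      have h1 : ⟪u - ustar, P' - q⟫ ≤ ‖u - ustar‖ * ‖P' - q‖ := real_inner_le_norm _ _
      have h2 : ‖P' - q‖ = ‖q - P'‖ := norm_sub_rev _ _
      have h3 : ‖u - ustar‖ * ‖P' - q‖ ≤ ‖u - ustar‖ * (η * ‖g - F u‖ + 2 * ε) := by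
        rw [h2]; exact mul_le_mul_of_nonneg_left hs (norm_nonneg _)
      linarith
    rw [hid3]
    have hεK : ε * ‖ustar - q‖ + ε ^ 2 + ‖u - ustar‖ * (2 * ε) ≤ ε * K := by
      have h1 : ε * ‖ustar - q‖ ≤ ε * (2 * ‖w - ustar‖ + 1) :=
        mul_le_mul_of_nonneg_left hq_ustar hε.le
      have h2 : ε ^ 2 ≤ ε := by nlinarith
      have h3 : ‖u - ustar‖ * (2 * ε) = ε * (2 * ‖u - ustar‖) := by ring
      have h4 : ε * K = ε * (2 * ‖w - ustar‖ + 1) + 2 * ε + ε * (2 * ‖u - ustar‖) := by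
        rw [hK]; ring
      linarith
    linarith [hqu, hfin, hεK]
  -- conclude
  have hKpos : (0:ℝ) < K := by linarith
  refine le_of_forall_pos_le_add ?_
  intro ε' hε'
  have hεpos : 0 < min 1 (ε' / K) := lt_min one_pos (by positivity)
  have h := perε (min 1 (ε' / K)) hεpos (min_le_left _ _)
  have : min 1 (ε' / K) * K ≤ ε' := by
    have := min_le_right 1 (ε' / K)
    calc min 1 (ε' / K) * K ≤ (ε' / K) * K := by nlinarith
    _ = ε' := by field_simp
  linarith
end

section
/- Gradient error decomposition for the cost-perception controller (Proposition 3, error bound). Let φ, φ̂: ℝ^{n_u} → ℝ and ψ, ψ̂: ℝⁿ → ℝ with φ, ψ continuously differentiable, let ε > 0, and let H ∈ ℝ^{n×n_u} be a matrix with operator norm ‖H‖ ≤ ℓ_{h_u}. Let g_u, ĝ_u denote the centered-difference gradient estimates of φ, φ̂ at a point u ∈ ℝ^{n_u} with stepsize ε, and g_x, ĝ_x those of ψ, ψ̂ at a point x ∈ ℝⁿ. Suppose ‖∇φ(u) − g_u(u)‖ ≤ e_{u,fd}, ‖∇ψ(x) − g_x(x)‖ ≤ e_{x,fd}, |φ(v)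 − φ̂(v)| ≤ M_u for all v with ‖v − u‖ ≤ ε, and |ψ(y) − ψ̂(y)| ≤ M_x for all y with ‖y − x‖ ≤ ε. Then the gradient error e(x,u) := (∇φ(u) − ĝ_u(u)) + Hᵀ(∇ψ(x) − ĝ_x(x)) satisfies ‖e(x,u)‖ ≤ e_{u,fd} + (n_u/ε) M_u + ℓ_{h_u} ( e_{x,fd} + (n/ε) M_x ). -/
/-- The centered (two-point) finite-difference gradient estimate of a scalar function
`g : ℝⁿ → ℝ` at `u` with stepsize `ε`. -/
noncomputable def cdGrad {n : ℕ} (g : EuclideanSpace ℝ (Fin n) → ℝ) (ε : ℝ)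
    (u : EuclideanSpace ℝ (Fin n)) : EuclideanSpace ℝ (Fin n) :=
  ∑ i : Fin n,
    ((g (u + ε • EuclideanSpace.single i (1 : ℝ)) -
        g (u - ε • EuclideanSpace.single i (1 : ℝ))) / (2 * ε)) •
      EuclideanSpace.single i (1 : ℝ)

lemma cdGrad_sub_bound {n : ℕ} (g ghat : EuclideanSpace ℝ (Fin n) → ℝ) (ε : ℝ)
    (hε : 0 < ε) (u : EuclideanSpace ℝ (Fin n)) (M : ℝ)
    (h : ∀ v : EuclideanSpace ℝ (Fin n), ‖v - u‖ ≤ ε → |g v - ghat v| ≤ M) :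
    ‖cdGrad g ε u - cdGrad ghat ε u‖ ≤ (n / ε) * M := by
  have hnorm : ∀ i : Fin n, ‖EuclideanSpace.single i (1 : ℝ)‖ = 1 := by
    intro i; simp [EuclideanSpace.norm_single]
  have hpt : ∀ i : Fin n, ∀ s : ℝ, |s| = 1 →
      ‖(u + (s * ε) • EuclideanSpace.single i (1 : ℝ)) - u‖ ≤ ε := by
    intro i s hs
    rw [add_sub_cancel_left, norm_smul, hnorm]
    simp [abs_mul, hs, le_of_eq, abs_of_pos hε]
  unfold cdGrad
  rw [← Finset.sum_sub_distrib]
  have key : ∀ i : Fin n,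
      ‖((g (u + ε • EuclideanSpace.single i (1 : ℝ)) -
          g (u - ε • EuclideanSpace.single i (1 : ℝ))) / (2 * ε)) •
        EuclideanSpace.single i (1 : ℝ) -
        ((ghat (u + ε • EuclideanSpace.single i (1 : ℝ)) -
          ghat (u - ε • EuclideanSpace.single i (1 : ℝ))) / (2 * ε)) •
        EuclideanSpace.single i (1 : ℝ)‖ ≤ M / ε := by
    intro i
    rw [← sub_smul, norm_smul, hnorm, mul_one]
    have hp : ‖(u + ε • EuclideanSpace.single i (1 : ℝ)) - u‖ ≤ ε := by
      have := hpt i 1 (by norm_num); simpa using this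
    have hm : ‖(u - ε • EuclideanSpace.single i (1 : ℝ)) - u‖ ≤ ε := by
      have := hpt i (-1) (by norm_num)
      simpa [neg_smul, sub_eq_add_neg] using this
    have h1 := h _ hp
    have h2 := h _ hm
    rw [div_sub_div_same, Real.norm_eq_abs, abs_div]
    rw [div_le_div_iff₀ (by positivity) hε]
    have habs : |g (u + ε • EuclideanSpace.single i (1 : ℝ)) -
        g (u - ε • EuclideanSpace.single i (1 : ℝ)) -
        (ghat (u + ε • EuclideanSpace.single i (1 : ℝ)) -
          ghat (u - ε • EuclideanSpace.single i (1 : ℝ)))| ≤ 2 * M := by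
      calc _ = |(g (u + ε • EuclideanSpace.single i (1 : ℝ)) -
            ghat (u + ε • EuclideanSpace.single i (1 : ℝ))) -
            (g (u - ε • EuclideanSpace.single i (1 : ℝ)) -
            ghat (u - ε • EuclideanSpace.single i (1 : ℝ)))| := by ring_nf
        _ ≤ _ + _ := abs_sub _ _
        _ ≤ M + M := add_le_add h1 h2
        _ = 2 * M := by ring
    calc |_| * ε ≤ (2 * M) * ε := by
          exact mul_le_mul_of_nonneg_right habs hε.le
      _ = M * (2 * ε) := by ring
      _ ≤ M * |2 * ε| := by
          apply mul_le_mul_of_nonneg_left (le_abs_self _)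
          have := h u (by simp [hε.le])
          exact le_trans (abs_nonneg _) this
  calc ‖∑ i : Fin n, _‖ ≤ ∑ i : Fin n, (M / ε) :=
        norm_sum_le_of_le _ (fun i _ => key i)
    _ = n * (M / ε) := by simp [Finset.sum_const, Finset.card_univ]
    _ = (n / ε) * M := by ring

/-- Gradient error decomposition for the cost-perception controller
(Proposition 3, error bound). -/
theorem gradient_error_decomposition {n nu : ℕ}
    (φ φhat : EuclideanSpace ℝ (Fin nu) → ℝ)
    (ψ ψhat : EuclideanSpace ℝ (Fin n) → ℝ)
    (hφ : ContDiff ℝ 1 φ) (hψ : ContDiff ℝ 1 ψ)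
    (ε : ℝ) (hε : 0 < ε)
    (Hm : EuclideanSpace ℝ (Fin nu) →L[ℝ] EuclideanSpace ℝ (Fin n))
    (ℓhu : ℝ) (hHm : ‖Hm‖ ≤ ℓhu)
    (u : EuclideanSpace ℝ (Fin nu)) (x : EuclideanSpace ℝ (Fin n))
    (eufd exfd Mu Mx : ℝ)
    (h1 : ‖gradient φ u - cdGrad φ ε u‖ ≤ eufd)
    (h2 : ‖gradient ψ x - cdGrad ψ ε x‖ ≤ exfd)
    (h3 : ∀ v : EuclideanSpace ℝ (Fin nu), ‖v - u‖ ≤ ε → |φ v - φhat v| ≤ Mu)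
    (h4 : ∀ y : EuclideanSpace ℝ (Fin n), ‖y - x‖ ≤ ε → |ψ y - ψhat y| ≤ Mx) :
    ‖(gradient φ u - cdGrad φhat ε u) +
        (ContinuousLinearMap.adjoint Hm) (gradient ψ x - cdGrad ψhat ε x)‖ ≤
      eufd + (nu / ε) * Mu + ℓhu * (exfd + (n / ε) * Mx) := by
  have hu : ‖gradient φ u - cdGrad φhat ε u‖ ≤ eufd + (nu / ε) * Mu := by
    calc ‖gradient φ u - cdGrad φhat ε u‖
        = ‖(gradient φ u - cdGrad φ ε u) + (cdGrad φ ε u - cdGrad φhat ε u)‖ := by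
          rw [sub_add_sub_cancel]
      _ ≤ _ + _ := norm_add_le _ _
      _ ≤ eufd + (nu / ε) * Mu :=
          add_le_add h1 (cdGrad_sub_bound φ φhat ε hε u Mu h3)
  have hx : ‖gradient ψ x - cdGrad ψhat ε x‖ ≤ exfd + (n / ε) * Mx := by
    calc ‖gradient ψ x - cdGrad ψhat ε x‖
        = ‖(gradient ψ x - cdGrad ψ ε x) + (cdGrad ψ ε x - cdGrad ψhat ε x)‖ := by
          rw [sub_add_sub_cancel]
      _ ≤ _ + _ := norm_add_le _ _
      _ ≤ exfd + (n / ε) * Mx :=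
          add_le_add h2 (cdGrad_sub_bound ψ ψhat ε hε x Mx h4)
  have hadj : ‖(ContinuousLinearMap.adjoint Hm) (gradient ψ x - cdGrad ψhat ε x)‖
      ≤ ℓhu * (exfd + (n / ε) * Mx) := by
    calc ‖(ContinuousLinearMap.adjoint Hm) (gradient ψ x - cdGrad ψhat ε x)‖
        ≤ ‖ContinuousLinearMap.adjoint Hm‖ * ‖gradient ψ x - cdGrad ψhat ε x‖ :=
          (ContinuousLinearMap.adjoint Hm).le_opNorm _
      _ ≤ ℓhu * (exfd + (n / ε) * Mx) := by
          apply mul_le_mul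
          · rw [show ‖ContinuousLinearMap.adjoint Hm‖ = ‖Hm‖ from LinearIsometryEquiv.norm_map _ Hm]; exact hHm
          · exact hx
          · exact norm_nonneg _
          · exact le_trans (norm_nonneg _) hHm
  calc ‖_ + _‖ ≤ _ + _ := norm_add_le _ _
    _ ≤ _ := add_le_add hu hadj
end
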